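/- arXiv:1405.4423 — 2 statements merged into one kernel-verified Lean document; each statement's English description precedes it below -/
import Mathlib

section
/- Let K be an n×n real symmetric positive semidefinite matrix, G an m×m real symmetric positive semidefinite matrix, Y an n×m real matrix, and let λ_d > 0 and λ_t > 0. Let k ∈ ℝⁿ and g ∈ ℝᵐ be arbitrary vectors. Then the prediction of the pairwise kernel least-squares model with kernel matrix (G + λ_t I) ⊗ (K + λ_d I) agrees with the two-step kernel ridge regression prediction; concretely, (g ⊗ k)ᵀ ((G + λ_t I) ⊗ (K + λ_d I))⁻¹ vec(Y) = kᵀ (K + λ_d I)⁻¹ Y (G + λ_t I)⁻¹ g. -/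
open Matrix
open scoped Kronecker

/-- The pairwise-kernel least-squares prediction with kernel matrix
`(G + λₜ I) ⊗ (K + λ_d I)` (indexed by object-task pairs) agrees with the
two-step kernel ridge regression prediction:
`(g ⊗ k)ᵀ ((G + λₜ I) ⊗ (K + λ_d I))⁻¹ vec(Y) = kᵀ (K + λ_d I)⁻¹ Y (G + λₜ I)⁻¹ g`. -/
theorem two_step_eq_pairwise_prediction
    {n m : Type*} [Fintype n] [Fintype m] [DecidableEq n] [DecidableEq m]
    (K : Matrix n n ℝ) (G : Matrix m m ℝ) (Y : Matrix n m ℝ)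
    (lam_d lam_t : ℝ) (hK : K.PosSemidef) (hG : G.PosSemidef)
    (hlam_d : 0 < lam_d) (hlam_t : 0 < lam_t)
    (k : n → ℝ) (g : m → ℝ) :
    (fun p : n × m => k p.1 * g p.2) ⬝ᵥ
        (((K + lam_d • 1) ⊗ₖ (G + lam_t • 1))⁻¹ *ᵥ fun p : n × m => Y p.1 p.2)
      = k ⬝ᵥ (((K + lam_d • 1)⁻¹ * Y * (G + lam_t • 1)⁻¹) *ᵥ g) := by
  have hGH : (G + lam_t • 1).IsHermitian := by
    have : (lam_t • (1 : Matrix m m ℝ)).IsHermitian := by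
      simp [Matrix.IsHermitian, Matrix.conjTranspose_smul]
    exact hG.1.add this
  have hB : ((G + lam_t • 1)⁻¹).IsHermitian := hGH.inv
  rw [Matrix.inv_kronecker]
  simp only [dotProduct, mulVec, dotProduct, Matrix.mul_apply, kroneckerMap_apply,
    Fintype.sum_prod_type, Finset.mul_sum, Finset.sum_mul]
  refine Finset.sum_congr rfl fun x _ => ?_
  refine Finset.sum_congr rfl fun x1 _ => ?_
  conv_rhs => rw [Finset.sum_comm]
  refine Finset.sum_congr rfl fun x2 _ => ?_
  refine Finset.sum_congr rfl fun x3 _ => ?_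
  have := hB.apply x3 x1
  simp only [star_trivial] at this
  rw [← this]
  ring
end

section
/- Let G be an m×m real symmetric positive semidefinite matrix, y ∈ ℝᵐ, λ > 0, and set α = (G + λI)⁻¹ y. Fix an index j, and let Ĝ denote the (m−1)×(m−1) submatrix of G obtained by deleting row and column j, ĝ the j-th row of G with entry j removed, and ŷ the vector y with entry j removed. Then the leave-one-out kernel ridge regression prediction at index j satisfies the closed-form shortcut: ĝᵀ (Ĝ + λI)⁻¹ ŷ = y_j − α_j / ((G + λI)⁻¹)_{jj}. -/
open Matrix

private lemma sum_split {m : Type*} [Fintype m] [DecidableEq m] (j : m) (f : m → ℝ) :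
    ∑ i, f i = f j + ∑ a : {i : m // i ≠ j}, f a := by
  rw [← Finset.add_sum_erase Finset.univ f (Finset.mem_univ j)]
  congr 1
  exact Finset.sum_subtype (Finset.univ.erase j)
    (fun x => by simp [Finset.mem_erase]) f

/-- Core identity: for a symmetric invertible `A` and `B` the principal submatrix
deleting index `j` (assumed invertible), with `α = A⁻¹ y`,
`g ⬝ B⁻¹ ŷ = y j - α j * (A j j - g ⬝ B⁻¹ g)` where `g` is row `j` with entry `j` removed. -/
private lemma krr_aux {m : Type*} [Fintype m] [DecidableEq m]
    (A : Matrix m m ℝ) (hA : A.IsHermitian) (hdet : IsUnit A.det) (j : m)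
    (B : Matrix {i : m // i ≠ j} {i : m // i ≠ j} ℝ)
    (hBA : ∀ a b : {i : m // i ≠ j}, B a b = A a b)
    (hBdet : IsUnit B.det)
    (y : m → ℝ) :
    (fun a : {i : m // i ≠ j} => A j a) ⬝ᵥ (B⁻¹ *ᵥ fun a : {i : m // i ≠ j} => y a)
      = y j - (A⁻¹ *ᵥ y) j *
        (A j j - (fun a : {i : m // i ≠ j} => A j a) ⬝ᵥ
          (B⁻¹ *ᵥ fun a : {i : m // i ≠ j} => A j a)) := by
  set α : m → ℝ := A⁻¹ *ᵥ y with hα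
  set g : {i : m // i ≠ j} → ℝ := fun a => A j a with hg
  have hAy : A *ᵥ α = y := by
    rw [hα, mulVec_mulVec, Matrix.mul_nonsing_inv _ hdet, one_mulVec]
  have hsym : ∀ a b : m, A a b = A b a := by
    intro a b
    conv_lhs => rw [← hA]
    simp [conjTranspose_apply]
  -- entrywise: y restricted = B *ᵥ α̂ + α j • g
  have hyhat : (fun a : {i : m // i ≠ j} => y a)
      = (B *ᵥ fun a : {i : m // i ≠ j} => α a) + α j • g := by
    funext a
    have := congrFun hAy a
    rw [mulVec] at this
    rw [dotProduct] at this
    rw [sum_split j (fun b => A (a : m) b * α b)] at this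
    simp only [Pi.add_apply, Pi.smul_apply, smul_eq_mul, mulVec, dotProduct, hBA, hg]
    rw [← this, hsym j a]
    ring
  have hBinv : ∀ x : {i : m // i ≠ j} → ℝ, B⁻¹ *ᵥ (B *ᵥ x) = x := by
    intro x
    rw [mulVec_mulVec, Matrix.nonsing_inv_mul _ hBdet, one_mulVec]
  have hyj : y j = A j j * α j + g ⬝ᵥ (fun a : {i : m // i ≠ j} => α a) := by
    have := congrFun hAy j
    rw [mulVec] at this
    rw [dotProduct] at this
    rw [sum_split j (fun b => A j b * α b)] at this
    rw [← this]
    rfl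
  rw [hyhat, mulVec_add, mulVec_smul, hBinv, dotProduct_add, dotProduct_smul, hyj]
  simp only [smul_eq_mul]
  ring

/-- Leave-one-out shortcut for kernel ridge regression: with `α = (G + λI)⁻¹ y`,
the LOO prediction at index `j` (training on all indices except `j`, with kernel
submatrix `Ĝ`, kernel row `ĝ` and labels `ŷ` obtained by deleting index `j`)
satisfies `ĝᵀ (Ĝ + λI)⁻¹ ŷ = y_j − α_j / ((G + λI)⁻¹)_{jj}`. -/
theorem krr_loo_shortcut
    {m : Type*} [Fintype m] [DecidableEq m]
    (G : Matrix m m ℝ) (hG : G.PosSemidef) (y : m → ℝ)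
    (lam : ℝ) (hlam : 0 < lam) (j : m) :
    (fun a : {i : m // i ≠ j} => G j a) ⬝ᵥ
        (((Matrix.of fun a b : {i : m // i ≠ j} => G a b) + lam • 1)⁻¹ *ᵥ
          fun a : {i : m // i ≠ j} => y a)
      = y j - ((G + lam • 1)⁻¹ *ᵥ y) j / ((G + lam • 1)⁻¹ j j) := by
  classical
  set A : Matrix m m ℝ := G + lam • 1 with hAdef
  set B : Matrix {i : m // i ≠ j} {i : m // i ≠ j} ℝ :=
    (Matrix.of fun a b : {i : m // i ≠ j} => G a b) + lam • 1 with hBdef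
  have hsmul1 : ((lam • 1 : Matrix m m ℝ)).PosDef := by
    rw [smul_one_eq_diagonal]
    exact posDef_diagonal_iff.mpr fun _ => hlam
  have hsmul2 : ((lam • 1 : Matrix {i : m // i ≠ j} {i : m // i ≠ j} ℝ)).PosDef := by
    rw [smul_one_eq_diagonal]
    exact posDef_diagonal_iff.mpr fun _ => hlam
  have hApd : A.PosDef := Matrix.PosDef.posSemidef_add hG hsmul1
  have hGhat : (Matrix.of fun a b : {i : m // i ≠ j} => G a b).PosSemidef := by
    have := hG.submatrix (fun a : {i : m // i ≠ j} => (a : m))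
    exact this
  have hBpd : B.PosDef := Matrix.PosDef.posSemidef_add hGhat hsmul2
  have hAdet : IsUnit A.det := hApd.det_pos.ne'.isUnit
  have hBdet : IsUnit B.det := hBpd.det_pos.ne'.isUnit
  have hAherm : A.IsHermitian := hApd.isHermitian
  have hBA : ∀ a b : {i : m // i ≠ j}, B a b = A a b := by
    intro a b
    simp only [hBdef, hAdef, Matrix.add_apply, Matrix.of_apply, Matrix.smul_apply,
      Matrix.one_apply, smul_eq_mul, Subtype.ext_iff]
  have hgA : ∀ a : {i : m // i ≠ j}, G j a = A j a := by
    intro a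
    simp [hAdef, Matrix.one_apply, (a.2.symm : j ≠ (a : m))]
  have key := krr_aux A hAherm hAdet j B hBA hBdet y
  have keyE := krr_aux A hAherm hAdet j B hBA hBdet (Pi.single j 1)
  -- simplify keyE
  have hsingle : (fun a : {i : m // i ≠ j} => (Pi.single j 1 : m → ℝ) a) = 0 := by
    funext a
    exact Pi.single_eq_of_ne a.2 1
  have hαE : (A⁻¹ *ᵥ Pi.single j 1) j = A⁻¹ j j := by
    simp [mulVec, dotProduct, Pi.single_apply]
  rw [hsingle, hαE] at keyE
  simp only [mulVec_zero, dotProduct_zero, Pi.single_eq_same] at keyE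
  set s : ℝ := A j j - (fun a : {i : m // i ≠ j} => A j a) ⬝ᵥ
      (B⁻¹ *ᵥ fun a : {i : m // i ≠ j} => A j a) with hs
  have hprod : s * A⁻¹ j j = 1 := by linarith [keyE]
  have hsval : s = (A⁻¹ j j)⁻¹ := eq_inv_of_mul_eq_one_left hprod
  have hgfun : (fun a : {i : m // i ≠ j} => G j a)
      = (fun a : {i : m // i ≠ j} => A j a) := funext fun a => hgA a
  rw [hgfun]
  rw [key, hsval, div_eq_mul_inv]
end
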